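/- arXiv:1704.02906 — 4 statements merged into one kernel-verified Lean document; each statement's English description precedes it below -/
import Mathlib

section
/- With the optimal discriminator D* substituted, the generators' objective E_{x~p_d} log D*_{k+1}(x) + sum_{i=1}^k E_{x~p_{g_i}} log(1 - D*_{k+1}(x)) equals KL(p_d || p_avg) + k * KL(p_g || p_avg) - (k+1) log(k+1) + k log k, where p_g = (1/k) sum_{i=1}^k p_{g_i} and p_avg = (p_d + sum_{i=1}^k p_{g_i})/(k+1). -/
open Real MeasureTheory

/-- Theorem 1 (MAD-GAN): with the optimal discriminator substituted, the generators'
objective equals `KL(p_d ‖ p_avg) + k·KL(p_g ‖ p_avg) − (k+1)log(k+1) + k log k`,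
where `p_g = (1/k) ∑ᵢ p_{gᵢ}` and `p_avg = (p_d + ∑ᵢ p_{gᵢ})/(k+1)`. -/
theorem madgan_generator_objective_decomposition
    {X : Type*} [MeasurableSpace X] (μ : Measure X)
    {k : ℕ} (hk : 1 ≤ k) (pd : X → ℝ) (pg : Fin k → X → ℝ)
    (hpd0 : ∀ x, 0 ≤ pd x) (hpg0 : ∀ i x, 0 ≤ pg i x)
    (hpd1 : ∫ x, pd x ∂μ = 1) (hpg1 : ∀ i, ∫ x, pg i x ∂μ = 1)
    (hpos : ∀ x, 0 < pd x + ∑ i, pg i x)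
    (hint1 : Integrable (fun x => pd x * log (pd x / (pd x + ∑ i, pg i x))) μ)
    (hint2 : ∀ i, Integrable
      (fun x => pg i x * log ((∑ j, pg j x) / (pd x + ∑ j, pg j x))) μ)
    (hintKL1 : Integrable
      (fun x => pd x * log (pd x / ((pd x + ∑ i, pg i x) / (k + 1)))) μ)
    (hintKL2 : Integrable
      (fun x => ((1 / (k : ℝ)) * ∑ i, pg i x) *
        log (((1 / (k : ℝ)) * ∑ i, pg i x) / ((pd x + ∑ i, pg i x) / (k + 1)))) μ) :
    (∫ x, pd x * log (pd x / (pd x + ∑ i, pg i x)) ∂μ) +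
      (∑ i : Fin k, ∫ x, pg i x * log ((∑ j, pg j x) / (pd x + ∑ j, pg j x)) ∂μ) =
    (∫ x, pd x * log (pd x / ((pd x + ∑ i, pg i x) / (k + 1))) ∂μ) +
      (k : ℝ) * (∫ x, ((1 / (k : ℝ)) * ∑ i, pg i x) *
        log (((1 / (k : ℝ)) * ∑ i, pg i x) / ((pd x + ∑ i, pg i x) / (k + 1))) ∂μ) -
      ((k : ℝ) + 1) * log ((k : ℝ) + 1) + (k : ℝ) * log (k : ℝ) := by
  set S := fun x => ∑ i, pg i x with hS
  have hkpos : (0:ℝ) < (k:ℝ) := by exact_mod_cast hk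
  have hk1 : (0:ℝ) < (k:ℝ) + 1 := by positivity
  have hpdInt : Integrable pd μ := by
    by_contra h
    rw [integral_undef h] at hpd1; norm_num at hpd1
  have hpgInt : ∀ i, Integrable (pg i) μ := by
    intro i; by_contra h
    have := hpg1 i
    rw [integral_undef h] at this; norm_num at this
  have hSInt : Integrable S μ := integrable_finset_sum _ fun i _ => hpgInt i
  have hSval : ∫ x, S x ∂μ = (k : ℝ) := by
    rw [hS, integral_finset_sum _ fun i _ => hpgInt i]
    simp [hpg1]
  have hSnn : ∀ x, 0 ≤ S x := fun x => Finset.sum_nonneg fun i _ => hpg0 i x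
  have hSlogInt : Integrable (fun x => S x * log (S x / (pd x + S x))) μ := by
    have heq : (fun x => S x * log (S x / (pd x + S x)))
        = fun x => ∑ i, pg i x * log (S x / (pd x + S x)) := by
      funext x; rw [← Finset.sum_mul]
    rw [heq]
    exact integrable_finset_sum _ fun i _ => hint2 i
  have hsum : (∑ i : Fin k, ∫ x, pg i x * log (S x / (pd x + S x)) ∂μ)
      = ∫ x, S x * log (S x / (pd x + S x)) ∂μ := by
    rw [← integral_finset_sum _ fun i _ => hint2 i]
    congr 1; funext x; rw [← Finset.sum_mul]
  have hB : ∫ x, pd x * log (pd x / ((pd x + S x) / ((k:ℝ) + 1))) ∂μ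
      = (∫ x, pd x * log (pd x / (pd x + S x)) ∂μ) + log ((k:ℝ) + 1) := by
    have hpt : ∀ x, pd x * log (pd x / ((pd x + S x) / ((k:ℝ) + 1)))
        = pd x * log (pd x / (pd x + S x)) + pd x * log ((k:ℝ) + 1) := by
      intro x
      rcases eq_or_lt_of_le (hpd0 x) with h0 | h0
      · simp [← h0]
      · have hT : 0 < pd x + S x := hpos x
        have hd : pd x / ((pd x + S x) / ((k:ℝ) + 1))
            = (pd x / (pd x + S x)) * ((k:ℝ) + 1) := by
          field_simp
        rw [hd, log_mul (by positivity) (by positivity), mul_add]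
    rw [show (∫ x, pd x * log (pd x / ((pd x + S x) / ((k:ℝ) + 1))) ∂μ)
        = ∫ x, (pd x * log (pd x / (pd x + S x)) + pd x * log ((k:ℝ) + 1)) ∂μ from by
      congr 1; funext x; exact hpt x]
    rw [integral_add hint1 (hpdInt.mul_const _), integral_mul_const, hpd1, one_mul]
  have hC : (k:ℝ) * (∫ x, ((1 / (k:ℝ)) * S x) *
        log (((1 / (k:ℝ)) * S x) / ((pd x + S x) / ((k:ℝ) + 1))) ∂μ)
      = (∫ x, S x * log (S x / (pd x + S x)) ∂μ)
        + (k:ℝ) * (log ((k:ℝ) + 1) - log (k:ℝ)) := by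
    have hpt : ∀ x, (k:ℝ) * (((1 / (k:ℝ)) * S x) *
          log (((1 / (k:ℝ)) * S x) / ((pd x + S x) / ((k:ℝ) + 1))))
        = S x * log (S x / (pd x + S x)) + S x * (log ((k:ℝ) + 1) - log (k:ℝ)) := by
      intro x
      rcases eq_or_lt_of_le (hSnn x) with h0 | h0
      · simp [← h0]
      · have hT : 0 < pd x + S x := hpos x
        have hd : ((1 / (k:ℝ)) * S x) / ((pd x + S x) / ((k:ℝ) + 1))
            = (S x / (pd x + S x)) * (((k:ℝ) + 1) / (k:ℝ)) := by
          field_simp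
        rw [hd, log_mul (by positivity) (by positivity),
          log_div (show ((k:ℝ)+1) ≠ 0 by positivity) (show (k:ℝ) ≠ 0 by positivity)]
        field_simp
    rw [← integral_const_mul]
    rw [show (∫ x, (k:ℝ) * (((1 / (k:ℝ)) * S x) *
          log (((1 / (k:ℝ)) * S x) / ((pd x + S x) / ((k:ℝ) + 1)))) ∂μ)
        = ∫ x, (S x * log (S x / (pd x + S x))
            + S x * (log ((k:ℝ) + 1) - log (k:ℝ))) ∂μ from by
      congr 1; funext x; exact hpt x]
    rw [integral_add hSlogInt (hSInt.mul_const _), integral_mul_const, hSval]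
  rw [hsum, hB, hC]
  ring
end

section
/- The function V(p_{g_1},...,p_{g_k}) = KL(p_d || p_avg) + k * KL((1/k) sum_i p_{g_i} || p_avg) - (k+1) log(k+1) + k log k, where p_avg = (p_d + sum_i p_{g_i})/(k+1), is bounded below by -(k+1) log(k+1) + k log k, and this global minimum is attained when p_d = (1/k) sum_{i=1}^k p_{g_i}. -/
open Real MeasureTheory

lemma madgan_aux (p r : ℝ) (hp : 0 ≤ p) (hr : 0 ≤ r) (hpr : 0 < p → 0 < r) :
    p - r ≤ p * log (p / r) := by
  rcases hp.eq_or_lt with h | h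
  · rw [← h]; simpa using hr
  · have hr' := hpr h
    have h1 : log (r / p) ≤ r / p - 1 := Real.log_le_sub_one_of_pos (div_pos hr' h)
    have h2 : log (p / r) = - log (r / p) := by
      rw [← Real.log_inv]; congr 1; field_simp
    rw [h2]
    have h3 : p * (r / p - 1) = r - p := by field_simp
    nlinarith [mul_le_mul_of_nonneg_left h1 hp]

lemma madgan_integrable_one {X : Type*} [MeasurableSpace X] {μ : Measure X}
    {f : X → ℝ} (h : ∫ x, f x ∂μ = 1) : Integrable f μ := by
  by_contra hf
  rw [integral_undef hf] at h
  norm_num at h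

/-- The MAD-GAN generators' objective
`V = KL(p_d ‖ p_avg) + k·KL((1/k)∑ᵢ p_{gᵢ} ‖ p_avg) − (k+1)log(k+1) + k log k`
is bounded below by `−(k+1)log(k+1) + k log k`, and this global minimum is
attained when `p_d = (1/k) ∑ᵢ p_{gᵢ}`. -/
theorem madgan_global_minimum
    {X : Type*} [MeasurableSpace X] (μ : Measure X)
    {k : ℕ} (hk : 1 ≤ k) (pd : X → ℝ) (pg : Fin k → X → ℝ)
    (hpd0 : ∀ x, 0 ≤ pd x) (hpg0 : ∀ i x, 0 ≤ pg i x)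
    (hpd1 : ∫ x, pd x ∂μ = 1) (hpg1 : ∀ i, ∫ x, pg i x ∂μ = 1)
    (hintKL1 : Integrable
      (fun x => pd x * log (pd x / ((pd x + ∑ i, pg i x) / (k + 1)))) μ)
    (hintKL2 : Integrable
      (fun x => ((1 / (k : ℝ)) * ∑ i, pg i x) *
        log (((1 / (k : ℝ)) * ∑ i, pg i x) / ((pd x + ∑ i, pg i x) / (k + 1)))) μ) :
    (-((k : ℝ) + 1) * log ((k : ℝ) + 1) + (k : ℝ) * log (k : ℝ) ≤
      (∫ x, pd x * log (pd x / ((pd x + ∑ i, pg i x) / (k + 1))) ∂μ) +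
        (k : ℝ) * (∫ x, ((1 / (k : ℝ)) * ∑ i, pg i x) *
          log (((1 / (k : ℝ)) * ∑ i, pg i x) / ((pd x + ∑ i, pg i x) / (k + 1))) ∂μ) -
        ((k : ℝ) + 1) * log ((k : ℝ) + 1) + (k : ℝ) * log (k : ℝ)) ∧
    ((pd = fun x => (1 / (k : ℝ)) * ∑ i, pg i x) →
      (∫ x, pd x * log (pd x / ((pd x + ∑ i, pg i x) / (k + 1))) ∂μ) +
        (k : ℝ) * (∫ x, ((1 / (k : ℝ)) * ∑ i, pg i x) *
          log (((1 / (k : ℝ)) * ∑ i, pg i x) / ((pd x + ∑ i, pg i x) / (k + 1))) ∂μ) -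
        ((k : ℝ) + 1) * log ((k : ℝ) + 1) + (k : ℝ) * log (k : ℝ) =
      -((k : ℝ) + 1) * log ((k : ℝ) + 1) + (k : ℝ) * log (k : ℝ)) := by
  have hk0 : (0:ℝ) < (k:ℝ) := by exact_mod_cast hk
  have hk1 : (0:ℝ) < (k:ℝ) + 1 := by positivity
  set s : X → ℝ := fun x => ∑ i, pg i x with hs
  have hs0 : ∀ x, 0 ≤ s x := fun x => Finset.sum_nonneg fun i _ => hpg0 i x
  set r : X → ℝ := fun x => (pd x + s x) / (k + 1) with hr
  have hr0 : ∀ x, 0 ≤ r x := fun x => by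
    have := hpd0 x; have := hs0 x; positivity
  have hintpd : Integrable pd μ := madgan_integrable_one hpd1
  have hintpg : ∀ i, Integrable (pg i) μ := fun i =>
    madgan_integrable_one (hpg1 i)
  have hints : Integrable s μ := by
    simpa [hs] using integrable_finset_sum Finset.univ (fun i _ => hintpg i)
  have hintss : ∫ x, s x ∂μ = (k : ℝ) := by
    rw [hs]
    rw [integral_finset_sum Finset.univ (fun i _ => hintpg i)]
    simp [hpg1]
  have hintr : Integrable r μ := by
    simpa [hr, div_eq_mul_inv] using (hintpd.add hints).mul_const ((k+1:ℝ))⁻¹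
  have hintrr : ∫ x, r x ∂μ = 1 := by
    rw [hr]
    simp only [div_eq_mul_inv]
    rw [integral_mul_const, integral_add hintpd hints, hpd1, hintss]
    field_simp
    ring
  -- first integral ≥ 0
  have h1 : 0 ≤ ∫ x, pd x * log (pd x / r x) ∂μ := by
    have hmono : ∫ x, (pd x - r x) ∂μ ≤ ∫ x, pd x * log (pd x / r x) ∂μ := by
      refine integral_mono (hintpd.sub hintr) hintKL1 fun x => ?_
      refine madgan_aux _ _ (hpd0 x) (hr0 x) fun hp => ?_
      have : 0 < pd x + s x := by have := hs0 x; linarith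
      rw [hr]; positivity
    rw [integral_sub hintpd hintr, hpd1, hintrr] at hmono
    simpa using hmono
  -- second integral ≥ 0
  have h2 : 0 ≤ ∫ x, ((1 / (k:ℝ)) * s x) * log (((1 / (k:ℝ)) * s x) / r x) ∂μ := by
    have hintq : Integrable (fun x => (1 / (k:ℝ)) * s x) μ := hints.const_mul _
    have hintq1 : ∫ x, (1 / (k:ℝ)) * s x ∂μ = 1 := by
      rw [integral_const_mul, hintss]; field_simp
    have hmono : ∫ x, ((1 / (k:ℝ)) * s x - r x) ∂μ ≤
        ∫ x, ((1 / (k:ℝ)) * s x) * log (((1 / (k:ℝ)) * s x) / r x) ∂μ := by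
      refine integral_mono (hintq.sub hintr) hintKL2 fun x => ?_
      refine madgan_aux _ _ (by have := hs0 x; positivity) (hr0 x) fun hq => ?_
      have hsx : 0 < s x := by
        by_contra hsx
        push_neg at hsx
        have : s x = 0 := le_antisymm hsx (hs0 x)
        rw [this] at hq; simp at hq
      have : 0 < pd x + s x := by have := hpd0 x; linarith
      rw [hr]; positivity
    rw [integral_sub hintq hintr, hintq1, hintrr] at hmono
    simpa using hmono
  constructor
  · have : 0 ≤ (∫ x, pd x * log (pd x / r x) ∂μ) +
        (k:ℝ) * ∫ x, ((1 / (k:ℝ)) * s x) * log (((1 / (k:ℝ)) * s x) / r x) ∂μ := by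
      positivity
    simp only [hr, hs] at this
    linarith
  · intro hpd
    have hz1 : ∀ x, pd x * log (pd x / r x) = 0 := by
      intro x
      rcases eq_or_lt_of_le (hs0 x) with h | h
      · have : pd x = 0 := by
          have hx : (∑ i, pg i x) = 0 := h.symm
          rw [hpd]; simp only; rw [hx, mul_zero]
        simp [this]
      · have hpdx : pd x = (1 / (k:ℝ)) * s x := by rw [hpd]
        have hrq : r x = pd x := by
          have hre : r x = (pd x + s x) / (k + 1) := rfl
          rw [hre, hpdx]
          field_simp
          ring
        rw [hrq, div_self, log_one, mul_zero]
        rw [hpdx]; positivity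
    have hz2 : ∀ x, ((1 / (k:ℝ)) * s x) * log (((1 / (k:ℝ)) * s x) / r x) = 0 := by
      intro x
      have := hz1 x
      rwa [hpd] at this
    have e1 : (∫ x, pd x * log (pd x / r x) ∂μ) = 0 := by
      simp only [hz1]; exact integral_zero _ _
    have e2 : (∫ x, ((1 / (k:ℝ)) * s x) * log (((1 / (k:ℝ)) * s x) / r x) ∂μ) = 0 := by
      simp only [hz2]; exact integral_zero _ _
    simp only [hr, hs] at e1 e2
    rw [e1, e2]
    ring
end

section
/- In the two-class case, for probability densities p_d and p_g, the objective ∫ p_d log D(x) + p_g log(1 - D(x)) dx over measurable D: X → (0,1) is maximized by D*(x) = p_d(x)/(p_d(x) + p_g(x)), and the maximal value equals KL(p_d || (p_d+p_g)/2) + KL(p_g || (p_d+p_g)/2) - log 4. -/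
open Real MeasureTheory

lemma gan_aux1 (a s t : ℝ) (ha : 0 ≤ a) (hs : 0 < s) (ht : 0 < t) :
    a * log t ≤ a * log (a / s) + (t * s - a) := by
  rcases eq_or_lt_of_le ha with h | h
  · simp [← h]; positivity
  · have h1 : a * log (t * s / a) ≤ a * (t * s / a - 1) :=
      mul_le_mul_of_nonneg_left (Real.log_le_sub_one_of_pos (by positivity)) ha
    have h2 : log (t * s / a) = log t - log (a / s) := by
      rw [Real.log_div (by positivity) (ne_of_gt h), Real.log_mul (ne_of_gt ht) (ne_of_gt hs),
        Real.log_div (ne_of_gt h) (ne_of_gt hs)]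
      ring
    have h3 : a * (t * s / a - 1) = t * s - a := by field_simp
    rw [h2, h3, mul_sub] at h1
    linarith

lemma gan_aux2 (a s : ℝ) (ha : 0 ≤ a) (hs : 0 < s) :
    a * log (a / (s / 2)) = a * log (a / s) + a * log 2 := by
  rcases eq_or_lt_of_le ha with h | h
  · simp [← h]
  · have hrw : a / (s / 2) = (a / s) * 2 := by field_simp
    rw [hrw, Real.log_mul (by positivity) two_ne_zero, mul_add]

/-- Two-class (original GAN) case: the objective `∫ p_d log D + p_g log(1−D)` over
measurable `D : X → (0,1)` is maximized by `D* = p_d/(p_d+p_g)`, and the maximal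
value equals `KL(p_d ‖ (p_d+p_g)/2) + KL(p_g ‖ (p_d+p_g)/2) − log 4`. -/
theorem gan_optimal_discriminator_value
    {X : Type*} [MeasurableSpace X] (μ : Measure X)
    (pd pg : X → ℝ)
    (hpd0 : ∀ x, 0 ≤ pd x) (hpg0 : ∀ x, 0 ≤ pg x)
    (hpd1 : ∫ x, pd x ∂μ = 1) (hpg1 : ∫ x, pg x ∂μ = 1)
    (hpos : ∀ x, 0 < pd x + pg x)
    (hintOpt : Integrable
      (fun x => pd x * log (pd x / (pd x + pg x)) +
        pg x * log (pg x / (pd x + pg x))) μ)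
    (hintKL1 : Integrable (fun x => pd x * log (pd x / ((pd x + pg x) / 2))) μ)
    (hintKL2 : Integrable (fun x => pg x * log (pg x / ((pd x + pg x) / 2))) μ) :
    (∀ D : X → ℝ, Measurable D → (∀ x, 0 < D x) → (∀ x, D x < 1) →
      Integrable (fun x => pd x * log (D x) + pg x * log (1 - D x)) μ →
      (∫ x, pd x * log (D x) + pg x * log (1 - D x) ∂μ) ≤
        ∫ x, pd x * log (pd x / (pd x + pg x)) +
          pg x * log (pg x / (pd x + pg x)) ∂μ) ∧
    (∫ x, pd x * log (pd x / (pd x + pg x)) +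
        pg x * log (pg x / (pd x + pg x)) ∂μ) =
      (∫ x, pd x * log (pd x / ((pd x + pg x) / 2)) ∂μ) +
        (∫ x, pg x * log (pg x / ((pd x + pg x) / 2)) ∂μ) - log 4 := by
  have hpdInt : Integrable pd μ := by
    by_contra h; rw [integral_undef h] at hpd1; norm_num at hpd1
  have hpgInt : Integrable pg μ := by
    by_contra h; rw [integral_undef h] at hpg1; norm_num at hpg1
  constructor
  · intro D hD hD0 hD1 hint
    refine integral_mono hint hintOpt fun x => ?_
    have h1 := gan_aux1 (pd x) (pd x + pg x) (D x) (hpd0 x) (hpos x) (hD0 x)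
    have h2 := gan_aux1 (pg x) (pd x + pg x) (1 - D x) (hpg0 x) (hpos x)
      (by linarith [hD1 x])
    nlinarith [h1, h2]
  · have hkey : (fun x => pd x * log (pd x / (pd x + pg x)) +
        pg x * log (pg x / (pd x + pg x))) =
        fun x => (pd x * log (pd x / ((pd x + pg x) / 2)) +
          pg x * log (pg x / ((pd x + pg x) / 2))) - (pd x + pg x) * log 2 := by
      funext x
      have h1 := gan_aux2 (pd x) (pd x + pg x) (hpd0 x) (hpos x)
      have h2 := gan_aux2 (pg x) (pd x + pg x) (hpg0 x) (hpos x)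
      rw [h1, h2]; ring
    have hIc : Integrable (fun x => (pd x + pg x) * log 2) μ :=
      (hpdInt.add hpgInt).mul_const _
    have hc : ∫ x, (pd x + pg x) * log 2 ∂μ = log 4 := by
      rw [integral_mul_const, integral_add hpdInt hpgInt, hpd1, hpg1]
      rw [show (4:ℝ) = 2 ^ 2 by norm_num, Real.log_pow]
      push_cast; ring
    have hsum : Integrable (fun x => pd x * log (pd x / ((pd x + pg x) / 2)) +
        pg x * log (pg x / ((pd x + pg x) / 2))) μ := hintKL1.add hintKL2
    rw [hkey, integral_sub hsum hIc, integral_add hintKL1 hintKL2, hc]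
end

section
/- Suppose p_d = (1/k) sum_{i=1}^k p_{g_i} and additionally for every x there exists an index i with p_{g_i}(x) = k p_d(x) and p_{g_j}(x) = 0 for all j ≠ i. Then with the optimal discriminator, the cross-entropy term sum_{i=1}^k ∫ p_{g_i}(x) log D*_i(x) dx equals sum_{i=1}^k ∫ p_{g_i}(x) log(k/(k+1)) dx = k log(k/(k+1)), which is the maximal possible value of this term subject to p_d = (1/k) sum_i p_{g_i}. -/
open Real MeasureTheory

/-- If `p_d = (1/k)∑ᵢ p_{gᵢ}` and the generators have disjoint supports, each with
density `k·p_d` on its support, then the generator-identification term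
`∑ᵢ ∫ p_{gᵢ} log D*ᵢ` equals `k·log(k/(k+1))`, and this is the maximal possible
value of this term among all generator configurations with mixture `p_d`. -/
theorem madgan_disjoint_supports_maximize_identification
    {X : Type*} [MeasurableSpace X] (μ : Measure X)
    {k : ℕ} (hk : 1 ≤ k) (pd : X → ℝ) (pg : Fin k → X → ℝ)
    (hpd0 : ∀ x, 0 ≤ pd x) (hpg0 : ∀ i x, 0 ≤ pg i x)
    (hpg1 : ∀ i, ∫ x, pg i x ∂μ = 1) (hpgInt : ∀ i, Integrable (pg i) μ)
    (hmix : ∀ x, pd x = (1 / (k : ℝ)) * ∑ i, pg i x)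
    (hdisj : ∀ x, ∃ i, pg i x = (k : ℝ) * pd x ∧ ∀ j, j ≠ i → pg j x = 0) :
    (∑ i : Fin k, ∫ x, pg i x * log (pg i x / (pd x + ∑ j, pg j x)) ∂μ =
      (k : ℝ) * log ((k : ℝ) / ((k : ℝ) + 1))) ∧
    (∀ q : Fin k → X → ℝ, (∀ i x, 0 ≤ q i x) → (∀ i, ∫ x, q i x ∂μ = 1) →
      (∀ x, pd x = (1 / (k : ℝ)) * ∑ i, q i x) →
      (∀ i, Integrable (fun x => q i x * log (q i x / (pd x + ∑ j, q j x))) μ) →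
      ∑ i : Fin k, ∫ x, q i x * log (q i x / (pd x + ∑ j, q j x)) ∂μ ≤
        (k : ℝ) * log ((k : ℝ) / ((k : ℝ) + 1))) := by
  have hk0 : (0:ℝ) < (k:ℝ) := by exact_mod_cast hk
  set c := log ((k : ℝ) / ((k : ℝ) + 1)) with hc
  constructor
  · have heq : ∀ i : Fin k, ∀ x,
        pg i x * log (pg i x / (pd x + ∑ j, pg j x)) = pg i x * c := by
      intro i x
      by_cases h0 : pg i x = 0
      · simp [h0]
      · obtain ⟨i0, hi0, hj⟩ := hdisj x
        have hii : i = i0 := by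
          by_contra hne; exact h0 (hj i hne)
        subst hii
        have hsum : ∑ j, pg j x = (k : ℝ) * pd x := by
          have h := hmix x
          field_simp at h
          linarith
        have hpdpos : 0 < pd x := by
          rcases lt_or_eq_of_le (hpd0 x) with h | h
          · exact h
          · exfalso; apply h0; rw [hi0, ← h]; ring
        rw [hi0, hsum]
        congr 1
        congr 1
        field_simp
        ring
    have hint : ∀ i : Fin k,
        ∫ x, pg i x * log (pg i x / (pd x + ∑ j, pg j x)) ∂μ = c := by
      intro i
      have : (fun x => pg i x * log (pg i x / (pd x + ∑ j, pg j x)))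
          = fun x => pg i x * c := funext (heq i)
      rw [this, integral_mul_const, hpg1 i, one_mul]
    rw [Finset.sum_congr rfl (fun i _ => hint i)]
    simp [Finset.sum_const, mul_comm]
  · intro q hq0 hq1 hqmix hqInt
    have hqIntbl : ∀ i, Integrable (q i) μ := by
      intro i
      by_contra h
      have := integral_undef h
      rw [hq1 i] at this
      norm_num at this
    have hle : ∀ i : Fin k, ∀ x,
        q i x * log (q i x / (pd x + ∑ j, q j x)) ≤ q i x * c := by
      intro i x
      by_cases h0 : q i x = 0
      · simp [h0]
      · have hqpos : 0 < q i x := lt_of_le_of_ne (hq0 i x) (Ne.symm h0)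
        have hsum : ∑ j, q j x = (k : ℝ) * pd x := by
          have h := hqmix x
          field_simp at h
          linarith
        have hqle : q i x ≤ (k : ℝ) * pd x := by
          rw [← hsum]
          exact Finset.single_le_sum (fun j _ => hq0 j x) (Finset.mem_univ i)
        have hpdpos : 0 < pd x := by
          by_contra h
          push_neg at h
          have : (k:ℝ) * pd x ≤ 0 := mul_nonpos_of_nonneg_of_nonpos (le_of_lt hk0) h
          linarith
        have hden : 0 < pd x + ∑ j, q j x := by
          rw [hsum]; positivity
        have hratio : q i x / (pd x + ∑ j, q j x) ≤ (k : ℝ) / ((k : ℝ) + 1) := by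
          rw [hsum, div_le_div_iff₀ (by positivity) (by positivity)]
          nlinarith
        have hlog : log (q i x / (pd x + ∑ j, q j x)) ≤ c := by
          rw [hc]
          exact Real.log_le_log (by positivity) hratio
        exact mul_le_mul_of_nonneg_left hlog (le_of_lt hqpos)
    have hstep : ∀ i : Fin k,
        ∫ x, q i x * log (q i x / (pd x + ∑ j, q j x)) ∂μ ≤ c := by
      intro i
      have h1 : ∫ x, q i x * log (q i x / (pd x + ∑ j, q j x)) ∂μ
          ≤ ∫ x, q i x * c ∂μ :=
        integral_mono (hqInt i) ((hqIntbl i).mul_const c) (hle i)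
      rwa [integral_mul_const, hq1 i, one_mul] at h1
    calc ∑ i : Fin k, ∫ x, q i x * log (q i x / (pd x + ∑ j, q j x)) ∂μ
        ≤ ∑ _i : Fin k, c := Finset.sum_le_sum (fun i _ => hstep i)
      _ = (k : ℝ) * c := by simp [Finset.sum_const, mul_comm]
end
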